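/- arXiv:2208.05654 — 2 statements merged into one kernel-verified Lean document; each statement's English description precedes it below -/
import Mathlib

section
/- For any A > 0, σ > 0, and integer K ≥ 2, the lower bound F₂(A,K,σ) = (1/2)·log(1 + K²A²/(2πe(K−1)²σ²)) − (1/2)·log(1 + A²/(12(K−1)²σ²)) satisfies F₂(A,K,σ) ≥ R_OWB(A,K,σ), where R_OWB(A,K,σ) = log K − (1/2)·log(2πe/12) − (1/2)·log(1 + 12(K−1)²σ²/A²). -/
/-!
With the signal-to-noise ratio `s = A² / ((K-1)² σ²)` and `c = 2πe`, the identity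
`1 + 12/s = (1 + s/12) · (12/s)` turns the Ozarow–Wyner-B bound into
`½ log (K² s / c) - ½ log (1 + s/12)`, so the claim reduces to `log x ≤ log (1 + x)`
for `x = K² s / c`.
-/

open Real

lemma logb_one_add_div_eq {b a s : ℝ} (ha : 0 < a) (hs : 0 < s) :
    logb b (1 + a / s) = logb b (1 + s / a) - logb b (s / a) := by
  have hsplit : 1 + a / s = (1 + s / a) / (s / a) := by
    field_simp
    ring
  rw [hsplit, logb_div (by positivity) (by positivity)]

lemma ozarowWynerB_eq {s c K : ℝ} (hs : 0 < s) (hc : c ≠ 0) (hK : K ≠ 0) :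
    logb 2 K - (1 / 2) * logb 2 (c / 12) - (1 / 2) * logb 2 (1 + 12 / s)
      = (1 / 2) * logb 2 (K ^ 2 * s / c) - (1 / 2) * logb 2 (1 + s / 12) := by
  rw [logb_one_add_div_eq (by norm_num) hs, logb_div hc (by norm_num),
    logb_div hs.ne' (by norm_num), logb_div (by positivity) hc,
    logb_mul (by positivity) hs.ne', logb_pow]
  push_cast
  ring

lemma ozarowWynerB_le_esdu {s c K : ℝ} (hs : 0 < s) (hc : 0 < c) (hK : K ≠ 0) :
    logb 2 K - (1 / 2) * logb 2 (c / 12) - (1 / 2) * logb 2 (1 + 12 / s)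
      ≤ (1 / 2) * logb 2 (1 + K ^ 2 * s / c) - (1 / 2) * logb 2 (1 + s / 12) := by
  rw [ozarowWynerB_eq hs hc.ne' hK]
  have hsnr : logb 2 (K ^ 2 * s / c) ≤ logb 2 (1 + K ^ 2 * s / c) :=
    logb_le_logb_of_le (by norm_num) (by positivity) (by linarith)
  linarith

/-- F₂(A,K,σ) ≥ R_OWB(A,K,σ): the ESDU rate lower bound from continuous-uniform
capacity bounds dominates the Ozarow–Wyner-B bound. -/
theorem stmt1 (A σ : ℝ) (K : ℕ) (hA : 0 < A) (hσ : 0 < σ) (hK : 2 ≤ K) :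
    logb 2 K - (1 / 2) * logb 2 (2 * π * exp 1 / 12)
      - (1 / 2) * logb 2 (1 + 12 * ((K : ℝ) - 1) ^ 2 * σ ^ 2 / A ^ 2)
    ≤ (1 / 2) * logb 2 (1 + (K : ℝ) ^ 2 * A ^ 2 / (2 * π * exp 1 * ((K : ℝ) - 1) ^ 2 * σ ^ 2))
      - (1 / 2) * logb 2 (1 + A ^ 2 / (12 * ((K : ℝ) - 1) ^ 2 * σ ^ 2)) := by
  have hK1 : (0 : ℝ) < (K : ℝ) - 1 := by
    have : (2 : ℝ) ≤ K := by exact_mod_cast hK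
    linarith
  set s := A ^ 2 / (((K : ℝ) - 1) ^ 2 * σ ^ 2) with hs_def
  have hs : 0 < s := by positivity
  have h12s : 12 * ((K : ℝ) - 1) ^ 2 * σ ^ 2 / A ^ 2 = 12 / s := by
    rw [hs_def]; field_simp
  have hKs : (K : ℝ) ^ 2 * A ^ 2 / (2 * π * exp 1 * ((K : ℝ) - 1) ^ 2 * σ ^ 2)
      = (K : ℝ) ^ 2 * s / (2 * π * exp 1) := by
    rw [hs_def]; field_simp
  have hs12 : A ^ 2 / (12 * ((K : ℝ) - 1) ^ 2 * σ ^ 2) = s / 12 := by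
    rw [hs_def]; field_simp
  rw [h12s, hKs, hs12]
  exact ozarowWynerB_le_esdu hs (by positivity) (by positivity)
end

section
/- For mutually independent random variables X (discrete, finite), U (continuous with finite differential entropy h(U)), and Z ~ N(0,σ²), the entropy power inequality implies I(X;X+Z) ≤ (1/2)·log( 2^{2·I(X+U;X+U+Z)} − 2^{2h(U)}/(2πeσ²) ). -/
open Real

/-!
Write `N(h) = 2^{2h}` and `A = 2πeσ²`. The Gaussian identity says `N(h(X+Z)) = A · N(I)`, and the
mutual-information identity then gives `N(h(X+U+Z)) = A · N(I(X+U;X+U+Z))`. In this exponential form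
the entropy power inequality reads `N(hU) + A · N(I) ≤ A · N(I(X+U;X+U+Z))`; dividing by `A` and
taking `½ log₂` gives the claim.
-/

namespace Real

variable {b x y : ℝ}

lemma le_half_mul_logb_iff_rpow_two_mul_le (hb : 1 < b) (hy : 0 < y) :
    x ≤ 1 / 2 * logb b y ↔ b ^ (2 * x) ≤ y := by
  rw [← le_logb_iff_rpow_le hb hy]
  constructor <;> intro h <;> linarith

lemma half_mul_logb_le_iff_le_rpow_two_mul (hb : 1 < b) (hy : 0 < y) :
    1 / 2 * logb b y ≤ x ↔ y ≤ b ^ (2 * x) := by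
  rw [← logb_le_iff_le_rpow hb hy]
  constructor <;> intro h <;> linarith

lemma rpow_two_mul_half_mul_logb_add (b_pos : 0 < b) (b_ne_one : b ≠ 1) (hy : 0 < y) :
    b ^ (2 * (1 / 2 * logb b y + x)) = y * b ^ (2 * x) := by
  rw [show 2 * (1 / 2 * logb b y + x) = logb b y + 2 * x by ring, rpow_add b_pos,
    rpow_logb b_pos b_ne_one hy]

end Real

/-- The entropy power inequality implies
I(X;X+Z) ≤ (1/2)·log₂(2^{2I(X+U;X+U+Z)} − 2^{2h(U)}/(2πeσ²)).
Here `I` = I(X;X+Z), `IXU` = I(X+U;X+U+Z), `hU` = h(U), `hXZ` = h(X+Z),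
`hXUZ` = h(X+U+Z), with h(X+Z) = (1/2)log₂(2πeσ²) + I(X;X+Z), the identity
I = IXU − h(X+U+Z) + h(X+Z), and the EPI h(X+U+Z) ≥ (1/2)log₂(2^{2h(U)} + 2^{2h(X+Z)}). -/
theorem stmt7 (σ I IXU hU hXZ hXUZ : ℝ) (hσ : 0 < σ)
    (h1 : hXZ = (1 / 2) * logb 2 (2 * π * exp 1 * σ ^ 2) + I)
    (h2 : I = IXU - hXUZ + hXZ)
    (hEPI : hXUZ ≥ (1 / 2) * logb 2 ((2 : ℝ) ^ (2 * hU) + (2 : ℝ) ^ (2 * hXZ))) :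
    I ≤ (1 / 2) * logb 2 ((2 : ℝ) ^ (2 * IXU) - (2 : ℝ) ^ (2 * hU) / (2 * π * exp 1 * σ ^ 2)) := by
  set A : ℝ := 2 * π * exp 1 * σ ^ 2
  have hA : 0 < A := by positivity
  have hNXZ : (2 : ℝ) ^ (2 * hXZ) = A * 2 ^ (2 * I) := by
    rw [h1, rpow_two_mul_half_mul_logb_add two_pos (by norm_num) hA]
  have hNXUZ : (2 : ℝ) ^ (2 * hXUZ) = A * 2 ^ (2 * IXU) := by
    rw [show hXUZ = 1 / 2 * logb 2 A + IXU by linarith,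
      rpow_two_mul_half_mul_logb_add two_pos (by norm_num) hA]
  have hEPI' : (2 : ℝ) ^ (2 * hU) + A * 2 ^ (2 * I) ≤ A * 2 ^ (2 * IXU) := by
    rw [← hNXZ, ← hNXUZ]
    exact (half_mul_logb_le_iff_le_rpow_two_mul one_lt_two (by positivity)).1 hEPI
  have hbound : (2 : ℝ) ^ (2 * I) ≤ 2 ^ (2 * IXU) - 2 ^ (2 * hU) / A := by
    rw [le_sub_iff_add_le, add_div' _ _ _ hA.ne', div_le_iff₀ hA]
    linarith
  exact (le_half_mul_logb_iff_rpow_two_mul_le one_lt_two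
    (hbound.trans_lt' (by positivity))).2 hbound
end
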